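/- arXiv:1911.09117 — 5 statements merged into one kernel-verified Lean document; each statement's English description precedes it below -/
import Mathlib

section
/- Let S be a nonempty finite set and let p : S × ℝ^m → ℝ be such that for every x ∈ S the map θ ↦ p(x,θ) is twice continuously differentiable and p(x,θ) > 0. Fix θ₀, let p̂₀(x) = p(x,θ₀)/Z(θ₀) with Z(θ) = Σ_{x∈S} p(x,θ), and define G(θ) = ln( Σ_{x∈S} p̂₀(x) · p(x,θ)/p(x,θ₀) ) − Σ_{x∈S} p̂₀(x) · ln( p(x,θ)/p(x,θ₀) ). Then G(θ₀) = 0, the gradient of G at θ₀ vanishes, and the Hessian of G at θ₀ equals the Fisher information matrix of the unnormalized family: ∂²G/∂θ_i∂θ_j (θ₀) = Σ_{x∈S} p̂₀(x) ∂_i ln p(x,θ₀) ∂_j ln p(x,θ₀) − (Σ_{x∈S} p̂₀(x) ∂_i ln p(x,θ₀)) (Σ_{x∈S} p̂₀(x) ∂_j ln p(x,θ₀)). -/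
/-!
Since `∑ x, p̂₀ x * (p x θ / p x θ₀) = Z θ / Z θ₀`, up to an additive constant
`G θ = log Z θ - ∑ x, p̂₀ x * log p x θ`. Its gradient is therefore the difference of the mean
scores under the moving distribution `p̂_θ = p(·,θ)/Z θ` and the frozen one `p̂₀`:
`∇G θ = ∑ x, (p̂_θ x - p̂₀ x) ∇ log p x θ`. This vanishes at `θ₀`, and so does the factor
`p̂_θ x - p̂₀ x`, so only its derivative `∇ p̂_θ x = p̂_θ x (∇ log p x θ - E_{p̂_θ}[∇ log p])`
contributes to the Hessian at `θ₀`; that contribution is the covariance of the scores.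
-/

open Real Finset

section

variable {S E : Type*} [Fintype S]

noncomputable def normalizedWeight (p : S → E → ℝ) (θ : E) (x : S) : ℝ :=
  p x θ / ∑ y, p y θ

/-- The AD-aware KL divergence `KL(⊥(p/Z) | p/Z)` of equation (22), frozen at `θ₀`. -/
noncomputable def adAwareKL (p : S → E → ℝ) (θ₀ θ : E) : ℝ :=
  log (∑ x, normalizedWeight p θ₀ x * (p x θ / p x θ₀))
    - ∑ x, normalizedWeight p θ₀ x * log (p x θ / p x θ₀)

section

variable [NormedAddCommGroup E] [NormedSpace ℝ E]

noncomputable def score (p : S → E → ℝ) (θ : E) (x : S) : E →L[ℝ] ℝ :=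
  fderiv ℝ (fun t => log (p x t)) θ

noncomputable def fisherInfo (p : S → E → ℝ) (θ u v : E) : ℝ :=
  (∑ x, normalizedWeight p θ x * (score p θ x u * score p θ x v))
    - (∑ x, normalizedWeight p θ x * score p θ x u) * (∑ x, normalizedWeight p θ x * score p θ x v)

end

variable [Nonempty S] {p : S → E → ℝ}

theorem sum_apply_pos {θ : E} (hp : ∀ x, 0 < p x θ) :
    0 < ∑ x, p x θ :=
  sum_pos (fun x _ => hp x) univ_nonempty

theorem adAwareKL_eq (hp : ∀ x θ, 0 < p x θ) (θ₀ θ : E) :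
    adAwareKL p θ₀ θ = log (∑ x, p x θ) - log (∑ x, p x θ₀)
      - ∑ x, normalizedWeight p θ₀ x * (log (p x θ) - log (p x θ₀)) := by
  have hratio : ∑ x, normalizedWeight p θ₀ x * (p x θ / p x θ₀)
      = (∑ x, p x θ) / ∑ x, p x θ₀ := by
    rw [sum_div]
    refine sum_congr rfl fun x _ => ?_
    rw [normalizedWeight]
    field_simp [(hp x θ₀).ne']
  rw [adAwareKL, hratio, log_div (sum_apply_pos fun x => hp x θ).ne'
    (sum_apply_pos fun x => hp x θ₀).ne']
  simp only [log_div (hp _ θ).ne' (hp _ θ₀).ne']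

theorem adAwareKL_self (hp : ∀ x θ, 0 < p x θ) (θ₀ : E) : adAwareKL p θ₀ θ₀ = 0 := by
  simp [adAwareKL_eq hp]

variable [NormedAddCommGroup E] [NormedSpace ℝ E]

theorem hasFDerivAt_log_sum {t : E} (hp : ∀ x, 0 < p x t)
    (hd : ∀ x, DifferentiableAt ℝ (p x) t) :
    HasFDerivAt (fun θ => log (∑ x, p x θ)) (∑ x, normalizedWeight p t x • score p t x) t := by
  have hsum := (HasFDerivAt.fun_sum fun x _ => (hd x).hasFDerivAt).log (sum_apply_pos hp).ne'
  convert hsum using 1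
  rw [smul_sum]
  refine sum_congr rfl fun x _ => ?_
  rw [score, ((hd x).hasFDerivAt.log (hp x).ne').fderiv, smul_smul, normalizedWeight]
  congr 1
  field_simp [(hp x).ne']

theorem hasFDerivAt_normalizedWeight (hp : ∀ x θ, 0 < p x θ) {t : E}
    (hd : ∀ x, DifferentiableAt ℝ (p x) t) (x : S) :
    HasFDerivAt (fun θ => normalizedWeight p θ x)
      (normalizedWeight p t x • (score p t x - ∑ y, normalizedWeight p t y • score p t y)) t := by
  have hexp : (fun θ => normalizedWeight p θ x)
      = fun θ => exp (log (p x θ) - log (∑ y, p y θ)) := by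
    funext θ
    rw [exp_sub, exp_log (hp x θ), exp_log (sum_apply_pos fun y => hp y θ), normalizedWeight]
  rw [hexp]
  convert (((hd x).log (hp x t).ne').hasFDerivAt.sub
    (hasFDerivAt_log_sum (fun y => hp y t) hd)).exp using 1
  · rfl
  · rw [congr_fun hexp t]
    rfl

theorem hasFDerivAt_adAwareKL (hp : ∀ x θ, 0 < p x θ) {t : E}
    (hd : ∀ x, DifferentiableAt ℝ (p x) t) (θ₀ : E) :
    HasFDerivAt (adAwareKL p θ₀)
      (∑ x, (normalizedWeight p t x - normalizedWeight p θ₀ x) • score p t x) t := by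
  have hlogZ := (hasFDerivAt_log_sum (fun x => hp x t) hd).sub_const (log (∑ x, p x θ₀))
  have hmean : HasFDerivAt (fun θ => ∑ x, normalizedWeight p θ₀ x * (log (p x θ) - log (p x θ₀)))
      (∑ x, normalizedWeight p θ₀ x • score p t x) t :=
    HasFDerivAt.fun_sum fun x _ =>
      (((hd x).log (hp x t).ne').hasFDerivAt.sub_const _).const_mul _
  rw [funext (adAwareKL_eq hp θ₀)]
  refine (hlogZ.fun_sub hmean).congr_fderiv ?_
  rw [← sum_sub_distrib]
  exact sum_congr rfl fun x _ => (sub_smul _ _ _).symm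

theorem fderiv_adAwareKL_self (hp : ∀ x θ, 0 < p x θ) (hd : ∀ x, Differentiable ℝ (p x))
    (θ₀ : E) : fderiv ℝ (adAwareKL p θ₀) θ₀ = 0 := by
  simp [(hasFDerivAt_adAwareKL hp (fun x => hd x θ₀) θ₀).fderiv]

theorem fderiv_fderiv_adAwareKL_self (hp : ∀ x θ, 0 < p x θ) (hpd : ∀ x, ContDiff ℝ 2 (p x))
    (θ₀ u v : E) :
    fderiv ℝ (fun t => fderiv ℝ (adAwareKL p θ₀) t v) θ₀ u = fisherInfo p θ₀ u v := by
  have hd : ∀ x, Differentiable ℝ (p x) := fun x => (hpd x).differentiable two_ne_zero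
  have hscore : ∀ x, DifferentiableAt ℝ (fun t => score p t x v) θ₀ := fun x =>
    (((((hpd x).log fun t => (hp x t).ne').fderiv_right (m := 1) le_rfl).differentiable
      one_ne_zero) θ₀).clm_apply (differentiableAt_const v)
  have hgrad : (fun t => fderiv ℝ (adAwareKL p θ₀) t v)
      = fun t => ∑ x, (normalizedWeight p t x - normalizedWeight p θ₀ x) * score p t x v := by
    funext t
    simp [(hasFDerivAt_adAwareKL hp (fun x => hd x t) θ₀).fderiv]
  have hhess := HasFDerivAt.fun_sum fun x (_ : x ∈ univ) =>
    ((hasFDerivAt_normalizedWeight hp (fun y => hd y θ₀) x).sub_const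
      (normalizedWeight p θ₀ x)).fun_mul (hscore x).hasFDerivAt
  rw [hgrad, hhess.fderiv]
  simp only [sub_self, zero_smul, zero_add, _root_.sum_apply, smul_apply,
    sub_apply, smul_eq_mul]
  set mean := ∑ x, normalizedWeight p θ₀ x * score p θ₀ x u
  have hterm : ∀ x, score p θ₀ x v * (normalizedWeight p θ₀ x * (score p θ₀ x u - mean))
      = normalizedWeight p θ₀ x * (score p θ₀ x u * score p θ₀ x v)
        - mean * (normalizedWeight p θ₀ x * score p θ₀ x v) := fun x => by ring
  simp only [hterm, sum_sub_distrib, ← mul_sum, fisherInfo]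
  ring

end

/-- The Hessian of the AD-aware KL divergence
`G(θ) = ln ⟨p(·,θ)/p(·,θ₀)⟩_{p̂₀} − ⟨ln (p(·,θ)/p(·,θ₀))⟩_{p̂₀}`
(equation (22) of the paper) at the base point `θ₀` equals the Fisher
information matrix of the unnormalized family (equation (21)); moreover
`G(θ₀) = 0` and the gradient of `G` at `θ₀` vanishes.  Here
`p̂₀ = p(·,θ₀)/Z(θ₀)` with `Z θ = ∑ x, p x θ`. -/
theorem stmt_10 (S : Type*) [Fintype S] [Nonempty S] (m : ℕ)
    (p : S → (Fin m → ℝ) → ℝ) (hp : ∀ x θ, 0 < p x θ)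
    (hpd : ∀ x, ContDiff ℝ 2 (p x)) (θ₀ : Fin m → ℝ)
    (G : (Fin m → ℝ) → ℝ)
    (hG : ∀ θ, G θ = Real.log (∑ x, (p x θ₀ / ∑ y, p y θ₀) * (p x θ / p x θ₀))
        - ∑ x, (p x θ₀ / ∑ y, p y θ₀) * Real.log (p x θ / p x θ₀)) :
    G θ₀ = 0 ∧ fderiv ℝ G θ₀ = 0 ∧
    ∀ i j : Fin m,
      fderiv ℝ (fun t => fderiv ℝ G t (Pi.single j 1)) θ₀ (Pi.single i 1)
        = (∑ x, (p x θ₀ / ∑ y, p y θ₀) *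
              (fderiv ℝ (fun t => Real.log (p x t)) θ₀ (Pi.single i 1) *
               fderiv ℝ (fun t => Real.log (p x t)) θ₀ (Pi.single j 1)))
          - (∑ x, (p x θ₀ / ∑ y, p y θ₀) *
                fderiv ℝ (fun t => Real.log (p x t)) θ₀ (Pi.single i 1))
            * (∑ x, (p x θ₀ / ∑ y, p y θ₀) *
                fderiv ℝ (fun t => Real.log (p x t)) θ₀ (Pi.single j 1)) := by
  obtain rfl : G = adAwareKL p θ₀ := funext hG
  exact ⟨adAwareKL_self hp θ₀,
    fderiv_adAwareKL_self hp (fun x => (hpd x).differentiable two_ne_zero) θ₀,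
    fun i j => fderiv_fderiv_adAwareKL_self hp hpd θ₀ _ _⟩
end

section
/- Let S be a nonempty finite set, H : S × S → ℂ Hermitian, and ψ : S × ℝ → ℂ such that for every σ the map θ ↦ ψ(σ,θ) is differentiable and ψ(σ,θ) ≠ 0. Write E_loc(σ,θ) = Σ_{σ'} H(σ,σ') ψ(σ',θ)/ψ(σ,θ), p(σ,θ) = |ψ(σ,θ)|², E(θ) = (Σ_{σ,σ'} conj(ψ(σ,θ)) H(σ,σ') ψ(σ',θ)) / (Σ_σ p(σ,θ)), and for f : S → ℂ let ⟨f⟩ = Σ_σ p(σ,θ) f(σ) / Σ_σ p(σ,θ). Then d E(θ)/dθ = 2 Re[ ⟨ (∂_θ conj(ψ)/conj(ψ)) · E_loc ⟩ − ⟨E_loc⟩ · ⟨ ∂_θ conj(ψ)/conj(ψ) ⟩ ]. -/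
/-!
With `a = ψ(·,θ)` and `b = ∂_θ ψ(·,θ)`, hermiticity makes the numerator `N = ⟨a, H a⟩` and the norm
`D = ⟨a, a⟩` real, with derivatives `B + conj B` and `A + conj A`, where `B = ⟨b, H a⟩` and
`A = ⟨b, a⟩`. The quotient rule then gives `2 Re (B / D - (N / D) (A / D))`, and cancelling the
Born weight `conj a * a` against `conj a` and `a` identifies `B / D`, `N / D`, `A / D` with
`⟨O E_loc⟩`, `⟨E_loc⟩`, `⟨O⟩` for `O = ∂_θ ψ* / ψ*`.
-/

open Finset ComplexConjugate

theorem HasDerivAt.div_of_add_conj {f g : ℝ → ℂ} {A B : ℂ} {θ : ℝ}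
    (hf : HasDerivAt f (B + conj B) θ) (hg : HasDerivAt g (A + conj A) θ)
    (hf_real : conj (f θ) = f θ) (hg_real : conj (g θ) = g θ) (hg0 : g θ ≠ 0) :
    HasDerivAt (fun t => f t / g t)
      (((2 : ℝ) * (B / g θ - f θ / g θ * (A / g θ)).re : ℝ) : ℂ) θ := by
  refine (hf.div hg hg0).congr_deriv ?_
  rw [Complex.ofReal_mul, Complex.re_eq_add_conj]
  simp only [map_sub, map_mul, map_div₀, hf_real, hg_real]
  field_simp
  push_cast
  ring

section
variable {S : Type*} [Fintype S]

theorem hasDerivAt_sum_conj_mul_mul (H : S → S → ℂ) {ψ : S → ℝ → ℂ} {ψ' : S → ℂ} {θ : ℝ}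
    (hψ : ∀ σ, HasDerivAt (ψ σ) (ψ' σ) θ) :
    HasDerivAt (fun t => ∑ σ, ∑ σ', conj (ψ σ t) * H σ σ' * ψ σ' t)
      ((∑ σ, ∑ σ', conj (ψ' σ) * H σ σ' * ψ σ' θ) +
        ∑ σ, ∑ σ', conj (ψ σ θ) * H σ σ' * ψ' σ') θ := by
  simp only [← sum_add_distrib]
  refine .fun_sum fun σ _ => .fun_sum fun σ' _ => ?_
  exact (((hψ σ).star.mul_const (H σ σ')).fun_mul (hψ σ')).congr_deriv (by simp)

theorem hasDerivAt_sum_conj_mul_self {ψ : S → ℝ → ℂ} {ψ' : S → ℂ} {θ : ℝ}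
    (hψ : ∀ σ, HasDerivAt (ψ σ) (ψ' σ) θ) :
    HasDerivAt (fun t => ∑ σ, conj (ψ σ t) * ψ σ t)
      ((∑ σ, conj (ψ' σ) * ψ σ θ) + ∑ σ, conj (ψ σ θ) * ψ' σ) θ := by
  rw [← sum_add_distrib]
  exact .fun_sum fun σ _ => (hψ σ).star.fun_mul (hψ σ)

theorem conj_sum_conj_mul_mul {H : S → S → ℂ} (hH : ∀ σ σ', H σ σ' = conj (H σ' σ))
    (u v : S → ℂ) :
    conj (∑ σ, ∑ σ', conj (u σ) * H σ σ' * v σ') = ∑ σ, ∑ σ', conj (v σ) * H σ σ' * u σ' := by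
  rw [map_sum, sum_comm]
  refine sum_congr rfl fun σ _ => ?_
  rw [map_sum]
  refine sum_congr rfl fun σ' _ => ?_
  rw [hH σ σ']
  simp only [map_mul, Complex.conj_conj]
  ring

theorem conj_sum_conj_mul (u v : S → ℂ) :
    conj (∑ σ, conj (u σ) * v σ) = ∑ σ, conj (v σ) * u σ := by
  simp [map_sum, mul_comm]

theorem sum_conj_mul_self_ne_zero [Nonempty S] {u : S → ℂ} (hu : ∀ σ, u σ ≠ 0) :
    ∑ σ, conj (u σ) * u σ ≠ 0 := by
  simp only [Complex.conj_mul']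
  exact_mod_cast (sum_pos (fun σ _ => pow_pos (norm_pos_iff.2 (hu σ)) 2) univ_nonempty).ne'

theorem sum_weighted_logDeriv_mul_localEnergy (H : S → S → ℂ) (a c : S → ℂ) (ha : ∀ σ, a σ ≠ 0) :
    ∑ σ, conj (a σ) * a σ * (c σ / conj (a σ) * ∑ σ', H σ σ' * a σ' / a σ) =
      ∑ σ, ∑ σ', c σ * H σ σ' * a σ' := by
  refine sum_congr rfl fun σ _ => ?_
  have : conj (a σ) ≠ 0 := by simpa using ha σ
  calc _ = c σ * ∑ σ', H σ σ' * a σ' := by rw [← sum_div]; field_simp [ha σ]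
    _ = _ := by simp only [mul_sum, mul_assoc]

theorem sum_weighted_localEnergy (H : S → S → ℂ) (a : S → ℂ) (ha : ∀ σ, a σ ≠ 0) :
    ∑ σ, conj (a σ) * a σ * ∑ σ', H σ σ' * a σ' / a σ =
      ∑ σ, ∑ σ', conj (a σ) * H σ σ' * a σ' := by
  refine sum_congr rfl fun σ _ => ?_
  rw [mul_sum]
  refine sum_congr rfl fun σ' _ => ?_
  field_simp [ha σ]

theorem sum_weighted_logDeriv (a c : S → ℂ) (ha : ∀ σ, a σ ≠ 0) :
    ∑ σ, conj (a σ) * a σ * (c σ / conj (a σ)) = ∑ σ, c σ * a σ := by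
  refine sum_congr rfl fun σ _ => ?_
  have : conj (a σ) ≠ 0 := by simpa using ha σ
  field_simp

end

/-- The VMC energy gradient formula (equation (6)/(A7) of the paper): for a
Hermitian `H` and a differentiable nowhere-vanishing family of wave functions
`ψ(·,θ)` on a finite configuration set, the θ-derivative of the energy
expectation `E(θ) = (∑_{σ,σ'} ψ*(σ) H(σ,σ') ψ(σ')) / (∑_σ |ψ(σ)|²)` equals
`2 Re[⟨(∂_θ ψ*/ψ*) E_loc⟩ − ⟨E_loc⟩⟨∂_θ ψ*/ψ*⟩]`, where
`E_loc(σ) = ∑ σ', H σ σ' ψ σ' / ψ σ` and `⟨·⟩` is the `|ψ|²`-weighted average. -/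
theorem stmt_13 (S : Type*) [Fintype S] [Nonempty S]
    (H : S → S → ℂ) (hH : ∀ σ σ', H σ σ' = starRingEnd ℂ (H σ' σ))
    (ψ : S → ℝ → ℂ) (hψd : ∀ σ, Differentiable ℝ (ψ σ)) (hψ : ∀ σ θ, ψ σ θ ≠ 0)
    (θ : ℝ) :
    HasDerivAt
      (fun t => (∑ σ, ∑ σ', starRingEnd ℂ (ψ σ t) * H σ σ' * ψ σ' t)
          / (∑ σ, starRingEnd ℂ (ψ σ t) * ψ σ t))
      ((((2 : ℝ) * (((∑ σ, starRingEnd ℂ (ψ σ θ) * ψ σ θ *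
              ((deriv (fun t => starRingEnd ℂ (ψ σ t)) θ / starRingEnd ℂ (ψ σ θ)) *
                (∑ σ', H σ σ' * ψ σ' θ / ψ σ θ)))
            / (∑ σ, starRingEnd ℂ (ψ σ θ) * ψ σ θ))
          - ((∑ σ, starRingEnd ℂ (ψ σ θ) * ψ σ θ * (∑ σ', H σ σ' * ψ σ' θ / ψ σ θ))
              / (∑ σ, starRingEnd ℂ (ψ σ θ) * ψ σ θ))
            * ((∑ σ, starRingEnd ℂ (ψ σ θ) * ψ σ θ *
                  (deriv (fun t => starRingEnd ℂ (ψ σ t)) θ / starRingEnd ℂ (ψ σ θ)))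
              / (∑ σ, starRingEnd ℂ (ψ σ θ) * ψ σ θ))).re : ℝ)) : ℂ) θ := by
  have hψ' : ∀ σ, HasDerivAt (ψ σ) (deriv (ψ σ) θ) θ := fun σ => (hψd σ θ).hasDerivAt
  have hderiv_conj : ∀ σ, deriv (fun t => conj (ψ σ t)) θ = conj (deriv (ψ σ) θ) :=
    fun σ => deriv.star
  simp only [hderiv_conj]
  rw [sum_weighted_logDeriv_mul_localEnergy H _ _ (hψ · θ), sum_weighted_localEnergy H _ (hψ · θ),
    sum_weighted_logDeriv _ _ (hψ · θ)]
  refine .div_of_add_conj ?_ ?_ (conj_sum_conj_mul_mul hH _ _) (conj_sum_conj_mul _ _)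
    (sum_conj_mul_self_ne_zero (hψ · θ))
  · rw [conj_sum_conj_mul_mul hH]
    exact hasDerivAt_sum_conj_mul_mul H hψ'
  · rw [conj_sum_conj_mul]
    exact hasDerivAt_sum_conj_mul_self hψ'
end

section
/- Let S be a nonempty finite set, H : S × S → ℂ Hermitian, ψ : S → ℂ with ψ(σ) ≠ 0 for all σ, and δψ : S → ℂ (a variation, e.g. δψ = ∂_θ ψ). Write E_loc(σ) = Σ_{σ'} H(σ,σ') ψ(σ')/ψ(σ). Then Re[ Σ_{σ,σ'} conj(ψ(σ)) H(σ,σ') δψ(σ') ] / Σ_σ |ψ(σ)|² = Re[ Σ_σ |ψ(σ)|² (δψ(σ)/ψ(σ)) conj(E_loc(σ)) ] / Σ_σ |ψ(σ)|². Consequently the difference term 'diff' between the naive AD gradient of the general ADVMC estimator and the exact energy gradient has vanishing expectation. -/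
/-- SM equations (A9)–(A10) of the paper: by Hermiticity of `H`, the
`|ψ|²`-weighted expectation of `∑ σ', H σ σ' δψ σ' / ψ σ` (written here via the
double sum `∑_{σ,σ'} ψ*(σ) H(σ,σ') δψ(σ')`) has the same real part as that of
`(δψ σ / ψ σ) · conj(E_loc σ)` with `E_loc σ = ∑ σ', H σ σ' ψ σ' / ψ σ`; hence
the difference term `diff` in the ADVMC gradient has vanishing expectation. -/
theorem stmt_14 (S : Type*) [Fintype S] [Nonempty S]
    (H : S → S → ℂ) (hH : ∀ σ σ', H σ σ' = starRingEnd ℂ (H σ' σ))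
    (ψ δψ : S → ℂ) (hψ : ∀ σ, ψ σ ≠ 0) :
    (∑ σ, ∑ σ', starRingEnd ℂ (ψ σ) * H σ σ' * δψ σ').re / (∑ σ, Complex.normSq (ψ σ))
      = (∑ σ, ((Complex.normSq (ψ σ) : ℂ) * (δψ σ / ψ σ) *
            starRingEnd ℂ (∑ σ', H σ σ' * ψ σ' / ψ σ))).re
        / (∑ σ, Complex.normSq (ψ σ)) := by
  have key : (∑ σ, ∑ σ', starRingEnd ℂ (ψ σ) * H σ σ' * δψ σ')
      = ∑ σ, ((Complex.normSq (ψ σ) : ℂ) * (δψ σ / ψ σ) *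
            starRingEnd ℂ (∑ σ', H σ σ' * ψ σ' / ψ σ)) := by
    rw [Finset.sum_comm]
    refine Finset.sum_congr rfl fun σ _ => ?_
    rw [map_sum, Finset.mul_sum]
    refine Finset.sum_congr rfl fun σ' _ => ?_
    rw [map_div₀, map_mul, ← hH σ' σ, Complex.normSq_eq_conj_mul_self]
    have hd : starRingEnd ℂ (ψ σ) * (starRingEnd ℂ (ψ σ))⁻¹ = 1 :=
      mul_inv_cancel₀ (by simpa using hψ σ)
    have he : ψ σ * (ψ σ)⁻¹ = 1 := mul_inv_cancel₀ (hψ σ)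
    field_simp
    linear_combination (-(starRingEnd ℂ (ψ σ') * H σ' σ * δψ σ * ψ σ * (ψ σ)⁻¹)) * hd -
      (starRingEnd ℂ (ψ σ') * H σ' σ * δψ σ) * he
  rw [key]
end

section
/- Let I be a nonempty finite index set of size N, and for each i ∈ I let ψ_i : ℝ^m → ℂ be differentiable with ψ_i(θ) ≠ 0, and let E_i ∈ ℂ be constants. Fix θ₀ and define G(θ) = 2 Re[ ( Σ_{i∈I} (conj(ψ_i(θ))/conj(ψ_i(θ₀))) E_i ) / ( Σ_{i∈I} conj(ψ_i(θ))/conj(ψ_i(θ₀)) ) ]. Then the gradient of G at θ₀ equals ∇G(θ₀) = 2 Re[ (1/N) Σ_{i∈I} (∇conj(ψ_i)(θ₀)/conj(ψ_i(θ₀))) E_i − ( (1/N) Σ_{i∈I} E_i ) · ( (1/N) Σ_{i∈I} ∇conj(ψ_i)(θ₀)/conj(ψ_i(θ₀)) ) ]. -/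
/-!
The reweighting factors `w i θ = ψ_i*(θ) / ψ_i*(θ₀)` all equal `1` at `θ₀`, so the quotient rule
turns the derivative of the reweighted average `(∑ w_i E_i) / ∑ w_i` at `θ₀` into a sample
covariance: `(1/N) ∑ w_i' E_i − ((1/N) ∑ E_i) ((1/N) ∑ w_i')`, with `w_i' = ∇ψ_i*(θ₀) / ψ_i*(θ₀)`.
-/

open ContinuousLinearMap

section

variable {𝕜 : Type*} [NontriviallyNormedField 𝕜] {E : Type*} [NormedAddCommGroup E]
  [NormedSpace 𝕜 E] {𝕜' : Type*} [NormedField 𝕜'] [NormedAlgebra 𝕜 𝕜'] {x : E}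

theorem HasFDerivAt.fun_div {c d : E → 𝕜'} {c' d' : E →L[𝕜] 𝕜'} (hc : HasFDerivAt c c' x)
    (hd : HasFDerivAt d d' x) (hx : d x ≠ 0) :
    HasFDerivAt (fun y => c y / d y) ((d x)⁻¹ • c' - (c x / d x ^ 2) • d') x := by
  have hinv : HasFDerivAt (fun y => (d y)⁻¹) ((-mulLeftRight 𝕜 𝕜' (d x)⁻¹ (d x)⁻¹).comp d') x :=
    (hasFDerivAt_inv' hx).comp x hd
  convert hc.fun_mul hinv using 1
  · simp only [div_eq_mul_inv]
  · ext v
    simp only [sub_apply, add_apply, smul_apply, comp_apply, neg_apply, mulLeftRight_apply,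
      smul_eq_mul]
    ring

theorem hasFDerivAt_sum_mul_div_sum {ι : Type*} [Fintype ι] [Nonempty ι] [CharZero 𝕜']
    {w : ι → E → 𝕜'} {w' : ι → E →L[𝕜] 𝕜'} (a : ι → 𝕜')
    (hw : ∀ i, HasFDerivAt (w i) (w' i) x) (hw₁ : ∀ i, w i x = 1) :
    HasFDerivAt (fun y => (∑ i, w i y * a i) / ∑ i, w i y)
      ((Fintype.card ι : 𝕜')⁻¹ • ∑ i, a i • w' i -
        ((Fintype.card ι : 𝕜')⁻¹ * ∑ i, a i) • (Fintype.card ι : 𝕜')⁻¹ • ∑ i, w' i) x := by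
  have hnum : HasFDerivAt (fun y => ∑ i, w i y * a i) (∑ i, a i • w' i) x :=
    HasFDerivAt.fun_sum fun i _ => (hw i).mul_const (a i)
  have hden : HasFDerivAt (fun y => ∑ i, w i y) (∑ i, w' i) x :=
    HasFDerivAt.fun_sum fun i _ => hw i
  have hN : (Fintype.card ι : 𝕜') ≠ 0 := Nat.cast_ne_zero.mpr Fintype.card_ne_zero
  have hden₀ : ∑ i, w i x = Fintype.card ι := by simp [hw₁]
  convert hnum.fun_div hden (hden₀ ▸ hN) using 1
  simp only [hw₁, one_mul, Finset.sum_const, Finset.card_univ, nsmul_eq_mul, mul_one]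
  ext v
  simp only [sub_apply, smul_apply, smul_eq_mul]
  field_simp

end

/-- SM equations (A20)–(A23) of the paper: the first-order efficient AD estimator
`G(θ) = 2 Re[(∑ i, (ψ_i*(θ)/ψ_i*(θ₀)) E_i) / (∑ i, ψ_i*(θ)/ψ_i*(θ₀))]`,
evaluated on a fixed finite sample set `I` of size `N` with detached local
energies `E_i`, has gradient at the base parameter `θ₀` equal to
`2 Re[(1/N) ∑ i (∇ψ_i*(θ₀)/ψ_i*(θ₀)) E_i − ((1/N) ∑ i E_i)((1/N) ∑ i ∇ψ_i*(θ₀)/ψ_i*(θ₀))]`. -/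
theorem stmt_15 (I : Type*) [Fintype I] [Nonempty I] (m : ℕ)
    (ψ : I → (Fin m → ℝ) → ℂ) (hψd : ∀ i, Differentiable ℝ (ψ i))
    (hψ : ∀ i θ, ψ i θ ≠ 0) (E : I → ℂ) (θ₀ : Fin m → ℝ)
    (G : (Fin m → ℝ) → ℝ)
    (hG : ∀ θ, G θ = 2 * (((∑ i, (starRingEnd ℂ (ψ i θ) / starRingEnd ℂ (ψ i θ₀)) * E i)
        / (∑ i, starRingEnd ℂ (ψ i θ) / starRingEnd ℂ (ψ i θ₀)))).re) :
    ∀ j : Fin m,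
      fderiv ℝ G θ₀ (Pi.single j 1)
        = 2 * ((((Fintype.card I : ℂ))⁻¹ *
              (∑ i, (fderiv ℝ (fun t => starRingEnd ℂ (ψ i t)) θ₀ (Pi.single j 1)
                  / starRingEnd ℂ (ψ i θ₀)) * E i)
            - (((Fintype.card I : ℂ))⁻¹ * (∑ i, E i)) *
              (((Fintype.card I : ℂ))⁻¹ *
                ∑ i, fderiv ℝ (fun t => starRingEnd ℂ (ψ i t)) θ₀ (Pi.single j 1)
                  / starRingEnd ℂ (ψ i θ₀))).re) := by
  intro j
  set D := fun i => fderiv ℝ (fun t => starRingEnd ℂ (ψ i t)) θ₀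
  have hconj : ∀ i, HasFDerivAt (fun t => starRingEnd ℂ (ψ i t)) (D i) θ₀ := fun i =>
    (hψd i θ₀).star.hasFDerivAt
  have hw : ∀ i, HasFDerivAt (fun θ => starRingEnd ℂ (ψ i θ) / starRingEnd ℂ (ψ i θ₀))
      ((starRingEnd ℂ (ψ i θ₀))⁻¹ • D i) θ₀ := fun i => by
    simpa only [div_eq_mul_inv] using (hconj i).mul_const (starRingEnd ℂ (ψ i θ₀))⁻¹
  have hw₁ : ∀ i, starRingEnd ℂ (ψ i θ₀) / starRingEnd ℂ (ψ i θ₀) = 1 := fun i =>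
    div_self ((map_ne_zero _).mpr (hψ i θ₀))
  have hG' := ((Complex.reCLM.hasFDerivAt.comp θ₀
    (hasFDerivAt_sum_mul_div_sum E hw hw₁)).const_mul (2 : ℝ)).congr_of_eventuallyEq
    (Filter.Eventually.of_forall hG)
  rw [hG'.fderiv]
  simp only [smul_apply, comp_apply, Complex.reCLM_apply, sub_apply, sum_apply,
    smul_eq_mul, D]
  simp only [div_eq_mul_inv, mul_comm, mul_left_comm]
end

section
/- Let V be a finite-dimensional complex inner product space, let ψ, δψ ∈ V with ψ ≠ 0, and define the Fubini–Study distance s(ψ,φ) = arccos √( |⟨ψ,φ⟩|² / (‖ψ‖² ‖φ‖²) ) for φ ≠ 0. Then lim_{t→0, t∈ℝ} s(ψ, ψ + t δψ)² / t² = ( ‖δψ‖² ‖ψ‖² − |⟨ψ,δψ⟩|² ) / ‖ψ‖⁴. -/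
/-!
The Gram determinant `‖a‖²‖b‖² - ‖⟪a, b⟫‖²` does not change when `a` is added to `b`, so for
`b = ψ + t • δψ` the squared sine of the Fubini–Study distance `s` equals
`t² (‖δψ‖²‖ψ‖² - ‖⟪ψ, δψ⟫‖²) / (‖ψ‖²‖ψ + t • δψ‖²)`. Writing `sin s = s · sinc s`, and using
`s → 0` and `sinc s → 1` as `t → 0`, this gives the limit of `s² / t²`.
-/

open scoped InnerProductSpace Topology
open Real Filter

section FubiniStudy

variable (𝕜 : Type*) {E : Type*} [RCLike 𝕜] [NormedAddCommGroup E] [InnerProductSpace 𝕜 E]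

noncomputable def fubiniStudyDist (a b : E) : ℝ :=
  arccos √(‖⟪a, b⟫_𝕜‖ ^ 2 / (‖a‖ ^ 2 * ‖b‖ ^ 2))

variable {𝕜}

lemma norm_inner_sq_div_le_one (a b : E) : ‖⟪a, b⟫_𝕜‖ ^ 2 / (‖a‖ ^ 2 * ‖b‖ ^ 2) ≤ 1 := by
  refine div_le_one_of_le₀ ?_ (by positivity)
  rw [← mul_pow]
  exact pow_le_pow_left₀ (norm_nonneg _) (norm_inner_le_norm a b) 2

lemma sin_fubiniStudyDist_sq (a b : E) :
    sin (fubiniStudyDist 𝕜 a b) ^ 2 = 1 - ‖⟪a, b⟫_𝕜‖ ^ 2 / (‖a‖ ^ 2 * ‖b‖ ^ 2) := by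
  have h0 : 0 ≤ ‖⟪a, b⟫_𝕜‖ ^ 2 / (‖a‖ ^ 2 * ‖b‖ ^ 2) := by positivity
  rw [fubiniStudyDist, sin_arccos, sq_sqrt h0, sq_sqrt (sub_nonneg.2 (norm_inner_sq_div_le_one a b))]

lemma fubiniStudyDist_self {a : E} (ha : a ≠ 0) : fubiniStudyDist 𝕜 a a = 0 := by
  have : ‖a‖ ^ 2 ≠ 0 := by positivity
  rw [fubiniStudyDist, inner_self_eq_norm_sq_to_K, norm_pow, RCLike.norm_ofReal, abs_norm,
    ← sq, div_self (pow_ne_zero 2 this), sqrt_one, arccos_one]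

lemma continuousAt_fubiniStudyDist {a b : E} (ha : a ≠ 0) (hb : b ≠ 0) :
    ContinuousAt (fubiniStudyDist 𝕜 a) b := by
  have : ‖a‖ ^ 2 * ‖b‖ ^ 2 ≠ 0 := by positivity
  unfold fubiniStudyDist
  fun_prop (disch := assumption)

lemma norm_sq_mul_norm_add_sq_sub_norm_inner_sq (a c : E) :
    ‖a‖ ^ 2 * ‖a + c‖ ^ 2 - ‖⟪a, a + c⟫_𝕜‖ ^ 2 = ‖a‖ ^ 2 * ‖c‖ ^ 2 - ‖⟪a, c⟫_𝕜‖ ^ 2 := by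
  rw [norm_add_sq (𝕜 := 𝕜), inner_add_right, inner_self_eq_norm_sq_to_K, RCLike.norm_sq_eq_def,
    RCLike.norm_sq_eq_def (z := ⟪a, c⟫_𝕜)]
  simp only [map_add, ← RCLike.ofReal_pow, RCLike.ofReal_re, RCLike.ofReal_im]
  ring

end FubiniStudy

lemma Real.mul_sinc (x : ℝ) : x * sinc x = sin x := by
  by_cases hx : x = 0
  · simp [hx]
  · rw [sinc_of_ne_zero hx, mul_div_cancel₀ _ hx]

lemma tendsto_sq_div_sq_of_sin_sq_eq {l : Filter ℝ} {u D : ℝ → ℝ} {K d : ℝ}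
    (hu : Tendsto u l (𝓝 0)) (hD : Tendsto D l (𝓝 d)) (hd : d ≠ 0)
    (h : ∀ᶠ t in l, t ≠ 0 ∧ sin (u t) ^ 2 = t ^ 2 * K / D t) :
    Tendsto (fun t => u t ^ 2 / t ^ 2) l (𝓝 (K / d)) := by
  have hsinc : Tendsto (fun t => sinc (u t)) l (𝓝 1) := by
    have := (continuous_sinc.tendsto 0).comp hu
    rwa [sinc_zero] at this
  have hlim : Tendsto (fun t => K / (D t * sinc (u t) ^ 2)) l (𝓝 (K / d)) := by
    have := tendsto_const_nhds (x := K) |>.div (hD.mul (hsinc.pow 2)) (by simpa using hd)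
    rwa [one_pow, mul_one] at this
  refine hlim.congr' ?_
  filter_upwards [h, hD.eventually_ne hd, hsinc.eventually_ne one_ne_zero]
    with t ⟨ht, hsin⟩ hDt hsinct
  rw [← mul_sinc, mul_pow, eq_div_iff hDt] at hsin
  field_simp
  linear_combination -hsin

theorem stmt_16_general (V : Type*) [NormedAddCommGroup V] [InnerProductSpace ℂ V]
    (ψ δψ : V) (hψ : ψ ≠ 0)
    (s : V → V → ℝ)
    (hs : ∀ a b : V,
      s a b = Real.arccos (Real.sqrt (‖(⟪a, b⟫_ℂ : ℂ)‖ ^ 2 / (‖a‖ ^ 2 * ‖b‖ ^ 2)))) :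
    Filter.Tendsto (fun t : ℝ => (s ψ (ψ + t • δψ)) ^ 2 / t ^ 2)
      (nhdsWithin (0 : ℝ) {(0 : ℝ)}ᶜ)
      (nhds ((‖δψ‖ ^ 2 * ‖ψ‖ ^ 2 - ‖(⟪ψ, δψ⟫_ℂ : ℂ)‖ ^ 2) / ‖ψ‖ ^ 4)) := by
  obtain rfl : s = fubiniStudyDist ℂ := funext₂ hs
  have hcurve : Tendsto (fun t : ℝ => ψ + t • δψ) (𝓝[≠] 0) (𝓝 ψ) := by
    have : Continuous (fun t : ℝ => ψ + t • δψ) := by fun_prop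
    exact (this.tendsto' 0 ψ (by simp)).mono_left nhdsWithin_le_nhds
  have hdist : Tendsto (fun t : ℝ => fubiniStudyDist ℂ ψ (ψ + t • δψ)) (𝓝[≠] 0) (𝓝 0) := by
    have := (continuousAt_fubiniStudyDist (𝕜 := ℂ) hψ hψ).tendsto.comp hcurve
    rwa [fubiniStudyDist_self (𝕜 := ℂ) hψ] at this
  have hnorm : Tendsto (fun t : ℝ => ‖ψ‖ ^ 2 * ‖ψ + t • δψ‖ ^ 2) (𝓝[≠] 0) (𝓝 (‖ψ‖ ^ 4)) := by
    convert (hcurve.norm.pow 2).const_mul (‖ψ‖ ^ 2) using 2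
    ring
  refine tendsto_sq_div_sq_of_sin_sq_eq hdist hnorm (by positivity) ?_
  filter_upwards [self_mem_nhdsWithin, hcurve.eventually_ne hψ] with t ht hcurve_t
  refine ⟨ht, ?_⟩
  have hD : ‖ψ‖ ^ 2 * ‖ψ + t • δψ‖ ^ 2 ≠ 0 := by positivity
  rw [sin_fubiniStudyDist_sq, eq_div_iff hD, sub_mul, one_mul, div_mul_cancel₀ _ hD,
    norm_sq_mul_norm_add_sq_sub_norm_inner_sq, ← Complex.coe_smul, inner_smul_right, norm_smul,
    norm_mul, Complex.norm_real]
  simp only [Real.norm_eq_abs, mul_pow, sq_abs]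
  ring

/-- SM equations (A12)–(A13) of the paper: the infinitesimal Fubini–Study
distance.  With `s(ψ,φ) = arccos √(|⟨ψ,φ⟩|²/(‖ψ‖²‖φ‖²))` on a finite-dimensional
complex inner product space, one has
`lim_{t→0, t≠0} s(ψ, ψ + t δψ)²/t² = (‖δψ‖²‖ψ‖² − |⟨ψ,δψ⟩|²)/‖ψ‖⁴`. -/
theorem stmt_16 (V : Type*) [NormedAddCommGroup V] [InnerProductSpace ℂ V]
    [FiniteDimensional ℂ V] (ψ δψ : V) (hψ : ψ ≠ 0)
    (s : V → V → ℝ)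
    (hs : ∀ a b : V,
      s a b = Real.arccos (Real.sqrt (‖(⟪a, b⟫_ℂ : ℂ)‖ ^ 2 / (‖a‖ ^ 2 * ‖b‖ ^ 2)))) :
    Filter.Tendsto (fun t : ℝ => (s ψ (ψ + t • δψ)) ^ 2 / t ^ 2)
      (nhdsWithin (0 : ℝ) {(0 : ℝ)}ᶜ)
      (nhds ((‖δψ‖ ^ 2 * ‖ψ‖ ^ 2 - ‖(⟪ψ, δψ⟫_ℂ : ℂ)‖ ^ 2) / ‖ψ‖ ^ 4)) :=
  stmt_16_general V ψ δψ hψ s hs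
end
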